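/- Suppose R_M ⫫ (M, R_Y) | (X, A, Y) and R_Y ⫫ (Y, R_M) | (X, A, M). Then the quantity [P(R_M = 1 | X, A) · P(R_Y = 1 | X, A, M, R_M = 1)] / P(R_M = 1, R_Y = 1 | X, A, M, Y) equals P(R_M = 1 | X, A) / P(R_M = 1 | X, A, Y, R_Y = 1), for all values making all conditioning events and denominators positive. -/

import Mathlib

open scoped Classical

noncomputable def Pr {Ω : Type*} [Fintype Ω] (p : Ω → ℝ) (E : Ω → Prop) : ℝ :=
  ∑ ω, if E ω then p ω else 0

noncomputable def cPr {Ω : Type*} [Fintype Ω] (p : Ω → ℝ) (E F : Ω → Prop) : ℝ :=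
  Pr p (fun ω => E ω ∧ F ω) / Pr p F

noncomputable def odds {Ω : Type*} [Fintype Ω] (p : Ω → ℝ) (E F : Ω → Prop) : ℝ :=
  cPr p E F / cPr p (fun ω => ¬ E ω) F

/-!
Both missingness indicators factor: given `(X, A, M, Y)`, `P(R_M = 1, R_Y = 1)` is
`P(R_M = 1 | X, A, Y) · P(R_Y = 1 | X, A, M)`, while `P(R_Y = 1 | X, A, M, R_M = 1)` reduces to
`P(R_Y = 1 | X, A, M)` and `P(R_M = 1 | X, A, Y, R_Y = 1)` to `P(R_M = 1 | X, A, Y)`. Each reduction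
averages a conditional probability that is constant on the fibres of a variable (`Y`, resp. `M`),
so the factor `P(R_Y = 1 | X, A, M)` cancels.
-/

section Pr

variable {Ω : Type*} [Fintype Ω] {p : Ω → ℝ} {E F G : Ω → Prop}

lemma Pr_nonneg (hp : ∀ ω, 0 ≤ p ω) (E : Ω → Prop) : 0 ≤ Pr p E :=
  Finset.sum_nonneg fun ω _ => by split_ifs <;> simp [hp ω]

lemma Pr_mono (hp : ∀ ω, 0 ≤ p ω) (h : ∀ ω, E ω → F ω) : Pr p E ≤ Pr p F := by
  refine Finset.sum_le_sum fun ω _ => ?_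
  split_ifs with hE hF
  · exact le_rfl
  · exact absurd (h ω hE) hF
  · exact hp ω
  · exact le_rfl

lemma Pr_eq_sum_fiber {𝒱 : Type*} (V : Ω → 𝒱) (F : Ω → Prop) :
    Pr p F = ∑ v ∈ Finset.univ.image V, Pr p (fun ω => V ω = v ∧ F ω) := by
  unfold Pr
  rw [Finset.sum_comm]
  refine Finset.sum_congr rfl fun ω _ => ?_
  by_cases hF : F ω
  · rw [Finset.sum_eq_single_of_mem (V ω) (Finset.mem_image_of_mem V (Finset.mem_univ ω))]
    · simp [hF]
    · intro v _ hv
      exact if_neg fun h => hv h.1.symm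
  · simp [hF]

lemma cPr_and_eq_mul (hp : ∀ ω, 0 ≤ p ω) :
    cPr p (fun ω => E ω ∧ G ω) F = cPr p G (fun ω => E ω ∧ F ω) * cPr p E F := by
  unfold cPr
  have hassoc : (fun ω => (E ω ∧ G ω) ∧ F ω) = fun ω => G ω ∧ E ω ∧ F ω := by
    funext ω; exact propext (by tauto)
  rw [hassoc]
  rcases (Pr_nonneg hp fun ω => E ω ∧ F ω).eq_or_lt with hEF | hEF
  · have hGEF : Pr p (fun ω => G ω ∧ E ω ∧ F ω) = 0 :=
      le_antisymm (hEF ▸ Pr_mono hp fun ω h => h.2) (Pr_nonneg hp _)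
    simp [hGEF, ← hEF]
  · rw [div_mul_div_cancel₀ hEF.ne']

lemma cPr_eq_of_forall_fiber (hp : ∀ ω, 0 ≤ p ω) {𝒱 : Type*} (V : Ω → 𝒱) {c : ℝ}
    (hF : Pr p F ≠ 0)
    (h : ∀ v, 0 < Pr p (fun ω => V ω = v ∧ F ω) → cPr p E (fun ω => V ω = v ∧ F ω) = c) :
    cPr p E F = c := by
  rw [cPr, div_eq_iff hF, Pr_eq_sum_fiber V, Pr_eq_sum_fiber V F, Finset.mul_sum]
  refine Finset.sum_congr rfl fun v _ => ?_
  rcases (Pr_nonneg hp fun ω => V ω = v ∧ F ω).eq_or_lt with hv | hv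
  · rw [← hv, mul_zero]
    exact le_antisymm (hv ▸ Pr_mono hp fun ω h => ⟨h.1, h.2.2⟩) (Pr_nonneg hp _)
  · rw [← h v hv, cPr, div_mul_cancel₀ _ hv.ne']
    congr 1; funext ω; exact propext (by tauto)

end Pr

theorem S4_tilting_identification_general
    {Ω 𝒳 𝒜 ℳ 𝒴 : Type*} [Fintype Ω]
    (p : Ω → ℝ) (hp : ∀ ω, 0 ≤ p ω)
    (X : Ω → 𝒳) (A : Ω → 𝒜) (M : Ω → ℳ) (Y : Ω → 𝒴) (RM RY : Ω → ℕ)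
    -- R_M ⫫ (M, R_Y) ∣ (X, A, Y)
    (h1 : ∀ (rm : ℕ) (m : ℳ) (ry : ℕ) (x : 𝒳) (a : 𝒜) (y : 𝒴),
      0 < Pr p (fun ω => M ω = m ∧ RY ω = ry ∧ X ω = x ∧ A ω = a ∧ Y ω = y) →
      cPr p (fun ω => RM ω = rm)
          (fun ω => M ω = m ∧ RY ω = ry ∧ X ω = x ∧ A ω = a ∧ Y ω = y)
        = cPr p (fun ω => RM ω = rm) (fun ω => X ω = x ∧ A ω = a ∧ Y ω = y))
    -- R_Y ⫫ (Y, R_M) ∣ (X, A, M)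
    (h2 : ∀ (ry : ℕ) (y : 𝒴) (rm : ℕ) (x : 𝒳) (a : 𝒜) (m : ℳ),
      0 < Pr p (fun ω => Y ω = y ∧ RM ω = rm ∧ X ω = x ∧ A ω = a ∧ M ω = m) →
      cPr p (fun ω => RY ω = ry)
          (fun ω => Y ω = y ∧ RM ω = rm ∧ X ω = x ∧ A ω = a ∧ M ω = m)
        = cPr p (fun ω => RY ω = ry) (fun ω => X ω = x ∧ A ω = a ∧ M ω = m)) :
    ∀ (x : 𝒳) (a : 𝒜) (m : ℳ) (y : 𝒴),
      0 < Pr p (fun ω => X ω = x ∧ A ω = a ∧ M ω = m ∧ Y ω = y) →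
      0 < Pr p (fun ω => X ω = x ∧ A ω = a ∧ Y ω = y ∧ RY ω = 1) →
      0 < Pr p (fun ω => X ω = x ∧ A ω = a ∧ M ω = m ∧ RM ω = 1) →
      0 < Pr p (fun ω => X ω = x ∧ A ω = a ∧ M ω = m ∧ Y ω = y ∧ RM ω = 1) →
      0 < cPr p (fun ω => RM ω = 1 ∧ RY ω = 1)
            (fun ω => X ω = x ∧ A ω = a ∧ M ω = m ∧ Y ω = y) →
      0 < cPr p (fun ω => RM ω = 1) (fun ω => X ω = x ∧ A ω = a ∧ Y ω = y ∧ RY ω = 1) →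
      (cPr p (fun ω => RM ω = 1) (fun ω => X ω = x ∧ A ω = a)
          * cPr p (fun ω => RY ω = 1) (fun ω => X ω = x ∧ A ω = a ∧ M ω = m ∧ RM ω = 1))
        / cPr p (fun ω => RM ω = 1 ∧ RY ω = 1)
            (fun ω => X ω = x ∧ A ω = a ∧ M ω = m ∧ Y ω = y)
        = cPr p (fun ω => RM ω = 1) (fun ω => X ω = x ∧ A ω = a)
          / cPr p (fun ω => RM ω = 1) (fun ω => X ω = x ∧ A ω = a ∧ Y ω = y ∧ RY ω = 1) := by
  intro x a m y hXAMY hXAYR hXAMR hXAMYR hboth _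
  have hRY_given_RM : cPr p (fun ω => RY ω = 1) (fun ω => X ω = x ∧ A ω = a ∧ M ω = m ∧ RM ω = 1)
      = cPr p (fun ω => RY ω = 1) (fun ω => X ω = x ∧ A ω = a ∧ M ω = m) :=
    cPr_eq_of_forall_fiber hp Y hXAMR.ne' fun v hv => by
      simpa only [and_comm, and_left_comm, and_assoc] using
        h2 1 v 1 x a m (by simpa only [and_comm, and_left_comm, and_assoc] using hv)
  have hRM_given_RY : cPr p (fun ω => RM ω = 1) (fun ω => X ω = x ∧ A ω = a ∧ Y ω = y ∧ RY ω = 1)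
      = cPr p (fun ω => RM ω = 1) (fun ω => X ω = x ∧ A ω = a ∧ Y ω = y) :=
    cPr_eq_of_forall_fiber hp M hXAYR.ne' fun v hv => by
      simpa only [and_comm, and_left_comm, and_assoc] using
        h1 1 v 1 x a y (by simpa only [and_comm, and_left_comm, and_assoc] using hv)
  have hRM_given_MY : cPr p (fun ω => RM ω = 1) (fun ω => X ω = x ∧ A ω = a ∧ M ω = m ∧ Y ω = y)
      = cPr p (fun ω => RM ω = 1) (fun ω => X ω = x ∧ A ω = a ∧ Y ω = y) :=
    cPr_eq_of_forall_fiber hp RY hXAMY.ne' fun v hv => by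
      simpa only [and_comm, and_left_comm, and_assoc] using
        h1 1 m v x a y (by simpa only [and_comm, and_left_comm, and_assoc] using hv)
  have hRY_given_RM_Y : cPr p (fun ω => RY ω = 1)
      (fun ω => RM ω = 1 ∧ X ω = x ∧ A ω = a ∧ M ω = m ∧ Y ω = y)
      = cPr p (fun ω => RY ω = 1) (fun ω => X ω = x ∧ A ω = a ∧ M ω = m) := by
    simpa only [and_comm, and_left_comm, and_assoc] using
      h2 1 y 1 x a m (by simpa only [and_comm, and_left_comm, and_assoc] using hXAMYR)
  rw [cPr_and_eq_mul hp, hRY_given_RM_Y, hRM_given_MY] at hboth ⊢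
  rw [hRY_given_RM, hRM_given_RY, mul_comm, mul_div_mul_left _ _ (left_ne_zero_of_mul hboth.ne')]

/-- Identification of the tilting function `g = hk` in Model S4. -/
theorem S4_tilting_identification
    {Ω 𝒳 𝒜 ℳ 𝒴 : Type*} [Fintype Ω]
    (p : Ω → ℝ) (hp : ∀ ω, 0 ≤ p ω) (hsum : ∑ ω, p ω = 1)
    (X : Ω → 𝒳) (A : Ω → 𝒜) (M : Ω → ℳ) (Y : Ω → 𝒴) (RM RY : Ω → ℕ)
    (hRM : ∀ ω, RM ω = 0 ∨ RM ω = 1) (hRY : ∀ ω, RY ω = 0 ∨ RY ω = 1)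
    -- R_M ⫫ (M, R_Y) ∣ (X, A, Y)
    (h1 : ∀ (rm : ℕ) (m : ℳ) (ry : ℕ) (x : 𝒳) (a : 𝒜) (y : 𝒴),
      0 < Pr p (fun ω => M ω = m ∧ RY ω = ry ∧ X ω = x ∧ A ω = a ∧ Y ω = y) →
      cPr p (fun ω => RM ω = rm)
          (fun ω => M ω = m ∧ RY ω = ry ∧ X ω = x ∧ A ω = a ∧ Y ω = y)
        = cPr p (fun ω => RM ω = rm) (fun ω => X ω = x ∧ A ω = a ∧ Y ω = y))
    -- R_Y ⫫ (Y, R_M) ∣ (X, A, M)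
    (h2 : ∀ (ry : ℕ) (y : 𝒴) (rm : ℕ) (x : 𝒳) (a : 𝒜) (m : ℳ),
      0 < Pr p (fun ω => Y ω = y ∧ RM ω = rm ∧ X ω = x ∧ A ω = a ∧ M ω = m) →
      cPr p (fun ω => RY ω = ry)
          (fun ω => Y ω = y ∧ RM ω = rm ∧ X ω = x ∧ A ω = a ∧ M ω = m)
        = cPr p (fun ω => RY ω = ry) (fun ω => X ω = x ∧ A ω = a ∧ M ω = m)) :
    ∀ (x : 𝒳) (a : 𝒜) (m : ℳ) (y : 𝒴),
      0 < Pr p (fun ω => X ω = x ∧ A ω = a ∧ M ω = m ∧ Y ω = y) →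
      0 < Pr p (fun ω => X ω = x ∧ A ω = a ∧ Y ω = y ∧ RY ω = 1) →
      0 < Pr p (fun ω => X ω = x ∧ A ω = a ∧ M ω = m ∧ RM ω = 1) →
      0 < Pr p (fun ω => X ω = x ∧ A ω = a ∧ M ω = m ∧ Y ω = y ∧ RM ω = 1) →
      0 < cPr p (fun ω => RM ω = 1 ∧ RY ω = 1)
            (fun ω => X ω = x ∧ A ω = a ∧ M ω = m ∧ Y ω = y) →
      0 < cPr p (fun ω => RM ω = 1) (fun ω => X ω = x ∧ A ω = a ∧ Y ω = y ∧ RY ω = 1) →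
      (cPr p (fun ω => RM ω = 1) (fun ω => X ω = x ∧ A ω = a)
          * cPr p (fun ω => RY ω = 1) (fun ω => X ω = x ∧ A ω = a ∧ M ω = m ∧ RM ω = 1))
        / cPr p (fun ω => RM ω = 1 ∧ RY ω = 1)
            (fun ω => X ω = x ∧ A ω = a ∧ M ω = m ∧ Y ω = y)
        = cPr p (fun ω => RM ω = 1) (fun ω => X ω = x ∧ A ω = a)
          / cPr p (fun ω => RM ω = 1) (fun ω => X ω = x ∧ A ω = a ∧ Y ω = y ∧ RY ω = 1) :=
  S4_tilting_identification_general p hp X A M Y RM RY h1 h2
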